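/- Let Γ be a K₄-free finite simple graph with vertex set V = {1, …, n}, let X be a maximal clique of Γ, and let H be the subgroup of P_Γ generated by {a_{ij} : i < j, {i,j} ⊆ X}. If {r,s} is an edge of Γ with {r,s} ⊄ X, then [[H, H], a_{rs}] = 1 in P_Γ, i.e., a_{rs} commutes with every element of the commutator subgroup [H, H]. -/

import Mathlib

abbrev PBIdx (n : ℕ) : Type := {p : Fin n × Fin n // p.1 < p.2}

namespace GraphicBraid

open scoped commutatorElement

def ofIdx {n : ℕ} {i j : Fin n} (h : i < j) : FreeGroup (PBIdx n) :=
  FreeGroup.of ⟨(i, j), h⟩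

/-- The Artin relators for the pure braid group `P_n`. -/
def pureBraidRels (n : ℕ) : Set (FreeGroup (PBIdx n)) :=
  {w | ∃ (i j r s : Fin n) (hij : i < j) (hrs : r < s),
      (s < i ∨ (i < r ∧ s < j)) ∧ w = ⁅ofIdx hij, ofIdx hrs⁆} ∪
  {w | ∃ (r i s j : Fin n) (hri : r < i) (his : i < s) (hsj : s < j),
      w = ⁅ofIdx (his.trans hsj), ofIdx hsj * ofIdx (hri.trans his) * (ofIdx hsj)⁻¹⁆} ∪
  {w | ∃ (i j r : Fin n) (hij : i < j) (hjr : j < r),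
      w = ⁅ofIdx hij * ofIdx (hij.trans hjr), ofIdx hjr⁆ ∨
      w = ⁅ofIdx hij, ofIdx (hij.trans hjr) * ofIdx hjr⁆}

/-- Relators killing the generators corresponding to non-edges of `Γ`. -/
def nonEdgeRels {n : ℕ} (Γ : SimpleGraph (Fin n)) : Set (FreeGroup (PBIdx n)) :=
  {w | ∃ p : PBIdx n, ¬ Γ.Adj p.1.1 p.1.2 ∧ w = FreeGroup.of p}

def graphicRels {n : ℕ} (Γ : SimpleGraph (Fin n)) : Set (FreeGroup (PBIdx n)) :=
  pureBraidRels n ∪ nonEdgeRels Γ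

/-- The graphic pure braid group `P_Γ`. -/
abbrev GPB {n : ℕ} (Γ : SimpleGraph (Fin n)) : Type := PresentedGroup (graphicRels Γ)

/-- The image of the Artin generator `a_{ij}` in `P_Γ`. -/
def agen {n : ℕ} (Γ : SimpleGraph (Fin n)) {i j : Fin n} (h : i < j) : GPB Γ :=
  PresentedGroup.of (rels := graphicRels Γ) ⟨(i, j), h⟩

/-- Relators killing the generators `a_{ij}` with `{i,j} ⊄ X`. -/
def killRels {n : ℕ} (X : Set (Fin n)) : Set (FreeGroup (PBIdx n)) :=
  {w | ∃ p : PBIdx n, ¬ (p.1.1 ∈ X ∧ p.1.2 ∈ X) ∧ w = FreeGroup.of p}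

/-- The quotient `P_X` of `P_Γ` obtained by killing all generators `a_{ij}` with `{i,j} ⊄ X`. -/
abbrev GPBX {n : ℕ} (Γ : SimpleGraph (Fin n)) (X : Set (Fin n)) : Type :=
  PresentedGroup (graphicRels Γ ∪ killRels X)

/-- The canonical surjection between presented groups when the set of relators grows. -/
def quotMap {α : Type*} {R S : Set (FreeGroup α)} (h : R ⊆ S) :
    PresentedGroup R →* PresentedGroup S :=
  QuotientGroup.map _ _ (MonoidHom.id _)
    (fun _ hx => Subgroup.normalClosure_mono h hx)

/-- The quotient map `ρ_X : P_Γ → P_X`. -/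
def rho {n : ℕ} (Γ : SimpleGraph (Fin n)) (X : Set (Fin n)) : GPB Γ →* GPBX Γ X :=
  quotMap Set.subset_union_left

lemma killRels_anti {n : ℕ} {X Y : Set (Fin n)} (h : X ⊆ Y) : killRels Y ⊆ killRels X := by
  rintro w ⟨p, hp, rfl⟩
  exact ⟨p, fun hx => hp ⟨h hx.1, h hx.2⟩, rfl⟩

/-- The quotient map `P_Y → P_X` for `X ⊆ Y`. -/
def rhoDown {n : ℕ} (Γ : SimpleGraph (Fin n)) {X Y : Set (Fin n)} (h : X ⊆ Y) :
    GPBX Γ Y →* GPBX Γ X :=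
  quotMap (Set.union_subset_union_right _ (killRels_anti h))

/-- `X` is a maximal clique of `Γ`. -/
def MaxClique {n : ℕ} (Γ : SimpleGraph (Fin n)) (X : Set (Fin n)) : Prop :=
  Γ.IsClique X ∧ ∀ Y : Set (Fin n), Γ.IsClique Y → X ⊆ Y → Y = X


/-- The subgroup of `P_Γ` generated by the generators `a_{ij}` with `{i,j} ⊆ X`. -/
def cliqueSubgroup {n : ℕ} (Γ : SimpleGraph (Fin n)) (X : Set (Fin n)) : Subgroup (GPB Γ) :=
  Subgroup.closure {g : GPB Γ | ∃ p : PBIdx n, (p.1.1 ∈ X ∧ p.1.2 ∈ X) ∧ g = PresentedGroup.of p}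

/-- The bipartite incidence graph of edges and 3-cliques (triangles) of `Γ`. -/
def incidenceGraph {n : ℕ} (Γ : SimpleGraph (Fin n)) :
    SimpleGraph (Γ.edgeSet ⊕ {T : Finset (Fin n) // Γ.IsNClique 3 T}) where
  Adj x y :=
    match x, y with
    | Sum.inl e, Sum.inr T => ∀ v : Fin n, v ∈ (e : Sym2 (Fin n)) → v ∈ T.1
    | Sum.inr T, Sum.inl e => ∀ v : Fin n, v ∈ (e : Sym2 (Fin n)) → v ∈ T.1
    | _, _ => False
  symm := ⟨by rintro (e | T) (f | S) h <;> exact h⟩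
  loopless := ⟨by rintro (e | T) h <;> exact h⟩

end GraphicBraid

/-!
Choose an endpoint `w` of `{r, s}` outside `X` and let `U` be the subgroup generated by the
`a_{mw}`, so `a_{rs} ∈ U`. For `i, j ≠ w`, the triangle relations on `{i, j, w}` and the crossing
relations show that `a_{ij}` normalizes `U`, and even centralizes it when `i` or `j` is not adjacent
to `w`. As `Γ` is `K₄`-free, at most two vertices of the clique `X` are adjacent to `w`, so all
generators of `H` but at most one centralize `U`. Hence `H` acts on `U` through a cyclic group, and
`[H, H]` centralizes `U`.
-/

open scoped commutatorElement

namespace Subgroup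

variable {G : Type*} [Group G]

theorem mem_normalizer_closure_of_conj_mem {s : Set G} {t : G}
    (h : ∀ g ∈ s, t * g * t⁻¹ ∈ closure s) (h' : ∀ g ∈ s, t⁻¹ * g * t ∈ closure s) :
    t ∈ normalizer (closure s : Set G) := by
  rw [mem_normalizer_iff_map_conj_eq, MonoidHom.map_closure]
  refine le_antisymm ((closure_le _).mpr ?_) ((closure_le _).mpr fun g hg => ?_)
  · rintro _ ⟨g, hg, rfl⟩
    exact h g hg
  · rw [← MonoidHom.map_closure]
    exact ⟨_, h' g hg, by simp [mul_assoc]⟩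

theorem conj_mem_of_commute_conj {U V : Subgroup G} (hVU : V ≤ U) {t c g : G}
    (ht : t ∈ normalizer (V : Set G)) (hc : c ∈ V) (hg : g ∈ U) (h : Commute t (c * g * c⁻¹)) :
    t * g * t⁻¹ ∈ U := by
  have htc : t * c * t⁻¹ ∈ U := hVU ((ht c).mp hc)
  have key : t * g * t⁻¹ = (t * c * t⁻¹)⁻¹ * (c * g * c⁻¹) * (t * c * t⁻¹) :=
    calc t * g * t⁻¹ = (t * c * t⁻¹)⁻¹ * (t * (c * g * c⁻¹) * t⁻¹) * (t * c * t⁻¹) := by group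
      _ = _ := by rw [h.eq, mul_inv_cancel_right]
  rw [key]
  exact mul_mem (mul_mem (inv_mem htc) (mul_mem (mul_mem (hVU hc) hg) (inv_mem (hVU hc)))) htc

theorem commutator_closure_le_centralizer {U : Subgroup G} {S : Set G} {t : G}
    (ht : t ∈ normalizer (U : Set G)) (hS : S ⊆ insert t (centralizer (U : Set G) : Set G)) :
    ⁅closure S, closure S⁆ ≤ centralizer U := by
  set ψ := U.normalizerMonoidHom
  set M := ((zpowers (ψ ⟨t, ht⟩)).comap ψ).map (normalizer (U : Set G)).subtype
  have hSM : closure S ≤ M := by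
    refine (closure_le _).mpr fun g hg => ?_
    rcases hS hg with rfl | hgC
    · exact ⟨⟨g, ht⟩, mem_zpowers _, rfl⟩
    · have hgN := centralizer_le_normalizer (U : Set G) hgC
      have hker : (⟨g, hgN⟩ : normalizer (U : Set G)) ∈ ψ.ker := by
        rw [normalizerMonoidHom_ker]
        exact mem_subgroupOf.mpr hgC
      refine ⟨⟨g, hgN⟩, ?_, rfl⟩
      change ψ _ ∈ zpowers _
      rw [MonoidHom.mem_ker.mp hker]
      exact one_mem _
  have hMC : ⁅M, M⁆ ≤ centralizer U := by
    rw [commutator_le]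
    rintro _ ⟨n₁, ⟨k₁, hk₁⟩, rfl⟩ _ ⟨n₂, ⟨k₂, hk₂⟩, rfl⟩
    have hker : ⁅n₁, n₂⁆ ∈ ψ.ker := by
      rw [MonoidHom.mem_ker, map_commutatorElement, ← hk₁, ← hk₂,
        commutatorElement_eq_one_iff_commute]
      exact Commute.zpow_zpow_self _ _ _
    rw [normalizerMonoidHom_ker, mem_subgroupOf] at hker
    exact map_commutatorElement (normalizer (U : Set G)).subtype n₁ n₂ ▸ hker
  exact (commutator_mono hSM hSM).trans hMC

theorem commutator_closure_le_centralizer_of_subsingleton {U : Subgroup G} {S : Set G}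
    (hN : S ⊆ normalizer (U : Set G)) (hC : (S \ (centralizer (U : Set G) : Set G)).Subsingleton) :
    ⁅closure S, closure S⁆ ≤ centralizer U := by
  obtain hS | ⟨t, hS⟩ := hC.eq_empty_or_singleton
  · exact commutator_closure_le_centralizer (one_mem _)
      ((Set.sdiff_eq_empty.mp hS).trans (Set.subset_insert _ _))
  · have htS : t ∈ S := (hS.symm ▸ Set.mem_singleton t : t ∈ S \ _).1
    refine commutator_closure_le_centralizer (hN htS) ?_
    rw [Set.insert_eq, Set.union_comm, ← Set.sdiff_subset_iff, hS]

end Subgroup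

namespace Commute

variable {G : Type*} [Group G]

theorem of_commute_conj {t c g : G} (hc : Commute t c) (h : Commute t (c * g * c⁻¹)) :
    Commute t g := by
  simpa [mul_assoc] using (hc.inv_right.mul_right h).mul_right hc

theorem inv_conj_of_commute_conj {g t a : G} (h : Commute g (a * t * a⁻¹)) :
    Commute t (a⁻¹ * g * a) := by
  simpa [mul_assoc] using (h.map (MulAut.conj a⁻¹)).symm

end Commute

/-- The relations between `a = a_{ij}`, `b = a_{ik}`, `c = a_{jk}` for `i < j < k`: the full twist
`a * b * c` of the three strands does not depend on the cyclic order of the factors. -/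
def IsTwistTriple {G : Type*} [Group G] (a b c : G) : Prop :=
  a * b * c = b * c * a ∧ a * b * c = c * a * b

namespace IsTwistTriple

variable {G : Type*} [Group G] {a b c : G}

theorem rotate (h : IsTwistTriple a b c) : IsTwistTriple b c a :=
  ⟨h.1.symm.trans h.2, h.1.symm⟩

theorem mem_normalizer_closure (h : IsTwistTriple a b c) :
    a ∈ Subgroup.normalizer (Subgroup.closure {b, c} : Set G) := by
  have hz : a * b * c ∈ Subgroup.centralizer (Subgroup.closure {b, c} : Set G) := by
    rw [Subgroup.centralizer_closure, Subgroup.mem_centralizer_iff]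
    rintro x (rfl | rfl)
    · calc x * (a * x * c) = x * (c * a * x) := by rw [h.2]
        _ = x * c * a * x := by group
        _ = a * x * c * x := by rw [← h.1]
    · calc x * (a * b * x) = x * a * b * x := by group
        _ = a * b * x * x := by rw [← h.2]
  have hbc : b * c ∈ Subgroup.closure {b, c} :=
    mul_mem (Subgroup.subset_closure (by simp)) (Subgroup.subset_closure (by simp))
  have ha : a = (a * b * c) * (b * c)⁻¹ := by group
  rw [ha]
  exact mul_mem (Subgroup.centralizer_le_normalizer _ hz)
    (Subgroup.le_normalizer (inv_mem hbc))

theorem commute_of_eq_one (h : IsTwistTriple a b c) (h1 : b = 1 ∨ c = 1) :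
    Commute a b ∧ Commute a c := by
  rcases h1 with rfl | rfl
  · exact ⟨Commute.one_right a, (by simpa using h.1 : a * c = c * a)⟩
  · exact ⟨(by simpa using h.1 : a * b = b * a), Commute.one_right a⟩

theorem conj_right_left (h : IsTwistTriple a b c) : c * a * c⁻¹ = b⁻¹ * a * b := by
  calc c * a * c⁻¹ = b⁻¹ * (b * c * a) * c⁻¹ := by group
    _ = b⁻¹ * a * b := by rw [← h.1]; group

theorem conj_inv_right_mid (h : IsTwistTriple a b c) : c⁻¹ * b * c = a * b * a⁻¹ := by
  calc c⁻¹ * b * c = c⁻¹ * (c * a * b) * a⁻¹ := by rw [← h.2, h.1]; group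
    _ = a * b * a⁻¹ := by group

end IsTwistTriple

theorem SimpleGraph.IsClique.eq_or_eq_or_eq_of_adj {α : Type*} {G : SimpleGraph α}
    (hK4 : G.CliqueFree 4) {X : Set α} (hX : G.IsClique X) {w a b c : α}
    (ha : a ∈ X ∧ G.Adj a w) (hb : b ∈ X ∧ G.Adj b w) (hc : c ∈ X ∧ G.Adj c w) :
    a = b ∨ a = c ∨ b = c := by
  classical
  by_contra! h
  have h3 : G.IsNClique 3 {a, b, c} :=
    ⟨hX.subset (by simp [Set.insert_subset_iff, ha.1, hb.1, hc.1]),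
      Finset.card_eq_three.mpr ⟨a, b, c, h.1, h.2.1, h.2.2, rfl⟩⟩
  obtain ⟨y, hy, hwy⟩ := h3.exists_not_adj_of_cliqueFree_succ hK4 w
  simp only [Finset.mem_insert, Finset.mem_singleton] at hy
  rcases hy with rfl | rfl | rfl
  exacts [hwy ha.2.symm, hwy hb.2.symm, hwy hc.2.symm]

namespace GraphicBraid

section

variable {n : ℕ} (Γ : SimpleGraph (Fin n))

theorem commute_of_commutator_mem_graphicRels {u v : FreeGroup (PBIdx n)}
    (h : ⁅u, v⁆ ∈ graphicRels Γ) :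
    Commute (PresentedGroup.mk (graphicRels Γ) u) (PresentedGroup.mk (graphicRels Γ) v) := by
  rw [← commutatorElement_eq_one_iff_commute, ← map_commutatorElement]
  exact (QuotientGroup.eq_one_iff _).mpr (Subgroup.subset_normalClosure h)

theorem mk_ofIdx {i j : Fin n} (h : i < j) :
    PresentedGroup.mk (graphicRels Γ) (ofIdx h) = agen Γ h :=
  rfl

theorem agen_eq_one_of_not_adj {i j : Fin n} (hij : i < j) (h : ¬ Γ.Adj i j) : agen Γ hij = 1 :=
  (QuotientGroup.eq_one_iff _).mpr (Subgroup.subset_normalClosure (Or.inr ⟨_, h, rfl⟩))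

theorem agen_commute_of_disjoint_or_nested {i j r s : Fin n} (hij : i < j) (hrs : r < s)
    (h : s < i ∨ (i < r ∧ s < j)) : Commute (agen Γ hij) (agen Γ hrs) :=
  commute_of_commutator_mem_graphicRels Γ (Or.inl (Or.inl (Or.inl ⟨i, j, r, s, hij, hrs, h, rfl⟩)))

theorem agen_commute_of_not_crossing {i j r s : Fin n} (hij : i < j) (hrs : r < s)
    (hri : r ≠ i) (hrj : r ≠ j) (hsi : s ≠ i) (hsj : s ≠ j)
    (h₁ : ¬ (r < i ∧ i < s ∧ s < j)) (h₂ : ¬ (i < r ∧ r < j ∧ j < s)) :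
    Commute (agen Γ hij) (agen Γ hrs) := by
  rcases (by omega : (s < i ∨ (i < r ∧ s < j)) ∨ (j < r ∨ (r < i ∧ j < s))) with h | h
  · exact agen_commute_of_disjoint_or_nested Γ hij hrs h
  · exact (agen_commute_of_disjoint_or_nested Γ hrs hij h).symm

theorem agen_commute_conj_of_crossing {r i s j : Fin n} (hri : r < i) (his : i < s) (hsj : s < j) :
    Commute (agen Γ (his.trans hsj)) (agen Γ hsj * agen Γ (hri.trans his) * (agen Γ hsj)⁻¹) := by
  simpa only [map_mul, map_inv, mk_ofIdx] using commute_of_commutator_mem_graphicRels Γ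
    (Or.inl (Or.inl (Or.inr ⟨r, i, s, j, hri, his, hsj, rfl⟩)))

theorem agen_isTwistTriple {i j k : Fin n} (hij : i < j) (hjk : j < k) :
    IsTwistTriple (agen Γ hij) (agen Γ (hij.trans hjk)) (agen Γ hjk) := by
  have h₁ : Commute (agen Γ hij * agen Γ (hij.trans hjk)) (agen Γ hjk) := by
    simpa only [map_mul, mk_ofIdx] using commute_of_commutator_mem_graphicRels Γ
      (Or.inl (Or.inr ⟨i, j, k, hij, hjk, Or.inl rfl⟩))
  have h₂ : Commute (agen Γ hij) (agen Γ (hij.trans hjk) * agen Γ hjk) := by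
    simpa only [map_mul, mk_ofIdx] using commute_of_commutator_mem_graphicRels Γ
      (Or.inl (Or.inr ⟨i, j, k, hij, hjk, Or.inr rfl⟩))
  exact ⟨by rw [mul_assoc, h₂.eq], by rw [h₁.eq, ← mul_assoc]⟩

/-- `a_{ij}` indexed by the unordered pair `{i, j}`, with the junk value `pairGen Γ i i = 1`. -/
def pairGen (i j : Fin n) : GPB Γ :=
  if h : i < j then agen Γ h else if h' : j < i then agen Γ h' else 1

theorem pairGen_of_lt {i j : Fin n} (h : i < j) : pairGen Γ i j = agen Γ h := dif_pos h

theorem pairGen_of_gt {i j : Fin n} (h : j < i) : pairGen Γ i j = agen Γ h := by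
  rw [pairGen, dif_neg h.asymm, dif_pos h]

theorem pairGen_self (i : Fin n) : pairGen Γ i i = 1 := by
  simp [pairGen]

theorem pairGen_eq_one_of_not_adj {i j : Fin n} (h : ¬ Γ.Adj i j) : pairGen Γ i j = 1 := by
  rcases lt_trichotomy i j with hij | rfl | hji
  · rw [pairGen_of_lt Γ hij, agen_eq_one_of_not_adj Γ hij h]
  · exact pairGen_self Γ i
  · rw [pairGen_of_gt Γ hji, agen_eq_one_of_not_adj Γ hji (fun h' => h h'.symm)]

theorem agen_isTwistTriple_pairGen {i j w : Fin n} (hij : i < j) (hwi : w ≠ i) (hwj : w ≠ j) :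
    IsTwistTriple (agen Γ hij) (pairGen Γ i w) (pairGen Γ j w) ∨
      IsTwistTriple (agen Γ hij) (pairGen Γ j w) (pairGen Γ i w) := by
  rcases lt_or_gt_of_ne hwi with hwi | hiw
  · rw [pairGen_of_gt Γ hwi, pairGen_of_gt Γ (hwi.trans hij)]
    exact Or.inl (agen_isTwistTriple Γ hwi hij).rotate.rotate
  rcases lt_or_gt_of_ne hwj with hwj | hjw
  · rw [pairGen_of_lt Γ hiw, pairGen_of_gt Γ hwj]
    exact Or.inr (agen_isTwistTriple Γ hiw hwj).rotate
  · rw [pairGen_of_lt Γ (hij.trans hjw), pairGen_of_lt Γ hjw]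
    exact Or.inl (agen_isTwistTriple Γ hij hjw)

theorem agen_mem_normalizer_closure_pairGen {i j w : Fin n} (hij : i < j) (hwi : w ≠ i)
    (hwj : w ≠ j) :
    agen Γ hij ∈ Subgroup.normalizer
      (Subgroup.closure {pairGen Γ i w, pairGen Γ j w} : Set (GPB Γ)) := by
  rcases agen_isTwistTriple_pairGen Γ hij hwi hwj with h | h
  · exact h.mem_normalizer_closure
  · exact Set.pair_comm (pairGen Γ i w) _ ▸ h.mem_normalizer_closure

theorem agen_commute_pairGen_of_not_adj {i j w : Fin n} (hij : i < j) (hwi : w ≠ i)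
    (hwj : w ≠ j) (h : ¬ Γ.Adj i w ∨ ¬ Γ.Adj j w) :
    Commute (agen Γ hij) (pairGen Γ i w) ∧ Commute (agen Γ hij) (pairGen Γ j w) := by
  have h1 := h.imp (pairGen_eq_one_of_not_adj Γ) (pairGen_eq_one_of_not_adj Γ)
  rcases agen_isTwistTriple_pairGen Γ hij hwi hwj with h | h
  · exact h.commute_of_eq_one h1
  · exact (h.commute_of_eq_one h1.symm).symm

/-- Every crossing of the chord `{m, w}` with the chord `{i, j}` can be undone by a conjugation
inside `⟨a_{iw}, a_{jw}⟩`. -/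
theorem exists_commute_conj_pairGen {i j m w : Fin n} (hij : i < j) (hmi : m ≠ i) (hmj : m ≠ j)
    (hwi : w ≠ i) (hwj : w ≠ j) :
    ∃ c ∈ Subgroup.closure {pairGen Γ i w, pairGen Γ j w},
      Commute (agen Γ hij) (c * pairGen Γ m w * c⁻¹) := by
  have hV : pairGen Γ j w ∈ Subgroup.closure {pairGen Γ i w, pairGen Γ j w} :=
    Subgroup.subset_closure (by simp)
  rcases lt_trichotomy m w with hmw | rfl | hwm
  · rw [pairGen_of_lt Γ hmw]
    by_cases h₁ : m < i ∧ i < w ∧ w < j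
    · refine ⟨_, hV, ?_⟩
      rw [pairGen_of_gt Γ h₁.2.2]
      exact agen_commute_conj_of_crossing Γ h₁.1 h₁.2.1 h₁.2.2
    by_cases h₂ : i < m ∧ m < j ∧ j < w
    · refine ⟨_, inv_mem hV, ?_⟩
      rw [pairGen_of_lt Γ h₂.2.2, inv_inv]
      exact (agen_commute_conj_of_crossing Γ h₂.1 h₂.2.1 h₂.2.2).inv_conj_of_commute_conj
    refine ⟨1, one_mem _, ?_⟩
    simpa using agen_commute_of_not_crossing Γ hij hmw hmi hmj hwi hwj h₁ h₂
  · exact ⟨1, one_mem _, by simp [pairGen_self]⟩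
  · rw [pairGen_of_gt Γ hwm]
    by_cases h₁ : w < i ∧ i < m ∧ m < j
    · refine ⟨_, inv_mem hV, ?_⟩
      rw [pairGen_of_gt Γ (h₁.1.trans h₁.2.1 |>.trans h₁.2.2), inv_inv,
        ← (agen_isTwistTriple Γ hwm (h₁.2.2)).conj_right_left]
      exact agen_commute_conj_of_crossing Γ h₁.1 h₁.2.1 h₁.2.2
    by_cases h₂ : i < w ∧ w < j ∧ j < m
    · refine ⟨_, hV, ?_⟩
      rw [pairGen_of_gt Γ h₂.2.1, ← (agen_isTwistTriple Γ h₂.2.1 h₂.2.2).conj_inv_right_mid]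
      exact (agen_commute_conj_of_crossing Γ h₂.1 h₂.2.1 h₂.2.2).inv_conj_of_commute_conj
    refine ⟨1, one_mem _, ?_⟩
    simpa using agen_commute_of_not_crossing Γ hij hwm hwi hwj hmi hmj h₁ h₂

def strandSubgroup (w : Fin n) : Subgroup (GPB Γ) :=
  Subgroup.closure (Set.range fun m => pairGen Γ m w)

theorem agen_mem_strandSubgroup {r s w : Fin n} (hrs : r < s) (hw : w = r ∨ w = s) :
    agen Γ hrs ∈ strandSubgroup Γ w := by
  rcases hw with rfl | rfl
  · exact Subgroup.subset_closure ⟨s, pairGen_of_gt Γ hrs⟩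
  · exact Subgroup.subset_closure ⟨r, pairGen_of_lt Γ hrs⟩

theorem closure_pairGen_le_strandSubgroup (i j w : Fin n) :
    Subgroup.closure {pairGen Γ i w, pairGen Γ j w} ≤ strandSubgroup Γ w :=
  Subgroup.closure_mono (by rintro _ (rfl | rfl) <;> exact ⟨_, rfl⟩)

theorem agen_mem_normalizer_strandSubgroup {i j w : Fin n} (hij : i < j) (hwi : w ≠ i)
    (hwj : w ≠ j) :
    agen Γ hij ∈ Subgroup.normalizer (strandSubgroup Γ w : Set (GPB Γ)) := by
  have hV := closure_pairGen_le_strandSubgroup Γ i j w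
  have ht := agen_mem_normalizer_closure_pairGen Γ hij hwi hwj
  have key : ∀ u ∈ ({agen Γ hij, (agen Γ hij)⁻¹} : Set (GPB Γ)), ∀ m,
      u * pairGen Γ m w * u⁻¹ ∈ strandSubgroup Γ w := by
    intro u hu m
    have hu' : u ∈ Subgroup.normalizer
        (Subgroup.closure {pairGen Γ i w, pairGen Γ j w} : Set (GPB Γ)) := by
      rcases hu with rfl | rfl
      exacts [ht, inv_mem ht]
    by_cases hm : m = i ∨ m = j
    · exact hV ((hu' _).mp (Subgroup.subset_closure (by rcases hm with rfl | rfl <;> simp)))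
    obtain ⟨c, hc, hcomm⟩ := exists_commute_conj_pairGen Γ hij (fun h => hm (Or.inl h))
      (fun h => hm (Or.inr h)) hwi hwj
    refine Subgroup.conj_mem_of_commute_conj hV hu' hc (Subgroup.subset_closure ⟨m, rfl⟩) ?_
    rcases hu with rfl | rfl
    exacts [hcomm, hcomm.inv_left]
  refine Subgroup.mem_normalizer_closure_of_conj_mem (s := Set.range fun m => pairGen Γ m w)
    ?_ ?_ <;> rintro _ ⟨m, rfl⟩
  · exact key _ (Or.inl rfl) m
  · have h := key _ (Or.inr rfl) m
    rw [inv_inv] at h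
    exact h

theorem agen_mem_centralizer_strandSubgroup {i j w : Fin n} (hij : i < j) (hwi : w ≠ i)
    (hwj : w ≠ j) (h : ¬ Γ.Adj i w ∨ ¬ Γ.Adj j w) :
    agen Γ hij ∈ Subgroup.centralizer (strandSubgroup Γ w : Set (GPB Γ)) := by
  obtain ⟨hi, hj⟩ := agen_commute_pairGen_of_not_adj Γ hij hwi hwj h
  have hV : Subgroup.closure {pairGen Γ i w, pairGen Γ j w} ≤
      Subgroup.centralizer {agen Γ hij} := by
    rw [Subgroup.closure_le]
    rintro _ (rfl | rfl) <;> rw [SetLike.mem_coe, Subgroup.mem_centralizer_singleton_iff]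
    exacts [hi.symm, hj.symm]
  rw [strandSubgroup, Subgroup.centralizer_closure, Subgroup.mem_centralizer_iff]
  rintro _ ⟨m, rfl⟩
  refine Commute.symm ?_
  by_cases hm : m = i ∨ m = j
  · rcases hm with rfl | rfl
    exacts [hi, hj]
  obtain ⟨c, hc, hcomm⟩ := exists_commute_conj_pairGen Γ hij (fun h => hm (Or.inl h))
    (fun h => hm (Or.inr h)) hwi hwj
  exact Commute.of_commute_conj (Subgroup.mem_centralizer_singleton_iff.mp (hV hc)).symm hcomm

theorem pbIdx_eq_of_no_three_distinct {Y : Set (Fin n)}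
    (hY : ∀ a ∈ Y, ∀ b ∈ Y, ∀ c ∈ Y, a = b ∨ a = c ∨ b = c) {p q : PBIdx n}
    (hp : p.1.1 ∈ Y ∧ p.1.2 ∈ Y) (hq : q.1.1 ∈ Y ∧ q.1.2 ∈ Y) : p = q := by
  obtain ⟨⟨i, j⟩, hij⟩ := p
  obtain ⟨⟨k, l⟩, hkl⟩ := q
  have hk := hY i hp.1 j hp.2 k hq.1
  have hl := hY i hp.1 j hp.2 l hq.2
  obtain ⟨rfl, rfl⟩ : i = k ∧ j = l := by simp only at hij hkl; omega
  rfl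

theorem cliqueSubgroup_commutator_le_centralizer_strandSubgroup (hK4 : Γ.CliqueFree 4)
    {X : Set (Fin n)} (hX : Γ.IsClique X) {w : Fin n} (hwX : w ∉ X) :
    ⁅cliqueSubgroup Γ X, cliqueSubgroup Γ X⁆ ≤
      Subgroup.centralizer (strandSubgroup Γ w : Set (GPB Γ)) := by
  have hne : ∀ v ∈ X, w ≠ v := fun v hv h => hwX (h ▸ hv)
  refine Subgroup.commutator_closure_le_centralizer_of_subsingleton ?_ ?_
  · rintro _ ⟨p, ⟨hi, hj⟩, rfl⟩
    exact agen_mem_normalizer_strandSubgroup Γ p.2 (hne _ hi) (hne _ hj)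
  · have hadj : ∀ p : PBIdx n, p.1.1 ∈ X ∧ p.1.2 ∈ X →
        PresentedGroup.of p ∉ Subgroup.centralizer (strandSubgroup Γ w : Set (GPB Γ)) →
        p.1.1 ∈ {v | v ∈ X ∧ Γ.Adj v w} ∧ p.1.2 ∈ {v | v ∈ X ∧ Γ.Adj v w} := by
      intro p ⟨hi, hj⟩ hp
      by_contra h
      exact hp (agen_mem_centralizer_strandSubgroup Γ p.2 (hne _ hi) (hne _ hj) (by tauto))
    rintro _ ⟨⟨p, hp, rfl⟩, hpC⟩ _ ⟨⟨q, hq, rfl⟩, hqC⟩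
    rw [pbIdx_eq_of_no_three_distinct
      (fun a ha b hb c hc => hX.eq_or_eq_or_eq_of_adj hK4 ha hb hc)
      (hadj p hp hpC) (hadj q hq hqC)]

end

theorem maximal_clique_commutator_commute_general {n : ℕ} (Γ : SimpleGraph (Fin n))
    (hK4 : Γ.CliqueFree 4) (X : Set (Fin n)) (hX : MaxClique Γ X)
    {r s : Fin n} (hrs : r < s) (hout : ¬ (r ∈ X ∧ s ∈ X)) :
    ∀ x ∈ ⁅cliqueSubgroup Γ X, cliqueSubgroup Γ X⁆, Commute (agen Γ hrs) x := by
  obtain ⟨w, hw, hwX⟩ : ∃ w, (w = r ∨ w = s) ∧ w ∉ X := by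
    by_cases hr : r ∈ X
    exacts [⟨s, Or.inr rfl, fun hs => hout ⟨hr, hs⟩⟩, ⟨r, Or.inl rfl, hr⟩]
  intro x hx
  exact Subgroup.mem_centralizer_iff.mp
    (cliqueSubgroup_commutator_le_centralizer_strandSubgroup Γ hK4 hX.1 hwX hx) _
    (agen_mem_strandSubgroup Γ hrs hw)

/-- For a `K₄`-free graph `Γ`, a maximal clique `X`, and an edge `{r,s}` of
`Γ` not contained in `X`, the generator `a_{rs}` commutes with the commutator subgroup
`[P_X, P_X]` in `P_Γ`. -/
theorem maximal_clique_commutator_commute {n : ℕ} (Γ : SimpleGraph (Fin n))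
    (hK4 : Γ.CliqueFree 4) (X : Set (Fin n)) (hX : MaxClique Γ X)
    {r s : Fin n} (hrs : r < s) (ers : Γ.Adj r s) (hout : ¬ (r ∈ X ∧ s ∈ X)) :
    ∀ x ∈ ⁅cliqueSubgroup Γ X, cliqueSubgroup Γ X⁆, Commute (agen Γ hrs) x :=
  maximal_clique_commutator_commute_general Γ hK4 X hX hrs hout

end GraphicBraid
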